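/- Let X ⊆ (P^1)^k be a set of s > 1 points in generic position, and suppose j ∈ N^k is such that j - e_l lies in D = min{i : N(i) > s} for exactly one index l (i.e., L_j = {l}). Then dim_k W_j = N(j) − s if N(j − 2e_l) = s, and dim_k W_j = 2N(j − e_l) − 2s if N(j − 2e_l) < s, where W_j = R_{e_l}(I_X)_{j - e_l}. -/
import Mathlib


open MvPolynomial

namespace MultiProjPoints

/-- The variable set of the multigraded coordinate ring of
`ℙ^{n 0} × ⋯ × ℙ^{n (k-1)}`: variables `x_{i,j}` with `i : Fin k`, `0 ≤ j ≤ n i`. -/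
abbrev Var (k : ℕ) (n : Fin k → ℕ) := Σ i : Fin k, Fin (n i + 1)

/-- The `ℕ^k`-grading weight: `deg x_{i,j} = e_i`. -/
def wt (k : ℕ) (n : Fin k → ℕ) : Var k n → (Fin k → ℕ) := fun v => Pi.single v.1 1

/-- The `i`-th standard basis vector of `ℕ^k`. -/
def e {k : ℕ} (l : Fin k) : Fin k → ℕ := Pi.single l 1

variable (K : Type) [Field K]

/-- The graded piece `R_d` of the `ℕ^k`-graded polynomial ring. -/
noncomputable def piece (k : ℕ) (n : Fin k → ℕ) (d : Fin k → ℕ) :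
    Submodule K (MvPolynomial (Var k n) K) :=
  weightedHomogeneousSubmodule K (wt k n) d

/-- `N(d) = ∏ binom (n i + d i) (d i)`, the dimension of `R_d`. -/
def NN (k : ℕ) (n : Fin k → ℕ) (d : Fin k → ℕ) : ℕ := ∏ i, (n i + d i).choose (d i)

/-- A (representative of a) point of `ℙ^{n 0} × ⋯ × ℙ^{n (k-1)}`. -/
def PointRep (k : ℕ) (n : Fin k → ℕ) := (i : Fin k) → Fin (n i + 1) → K

/-- A valid representative: every coordinate block is nonzero. -/
def IsRep {k : ℕ} {n : Fin k → ℕ} (P : PointRep K k n) : Prop := ∀ i, P i ≠ 0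

/-- Two representatives define the same point of multi-projective space. -/
def ProjEq {k : ℕ} {n : Fin k → ℕ} (P Q : PointRep K k n) : Prop :=
  ∀ i, ∃ c : K, c ≠ 0 ∧ P i = c • Q i

/-- A tuple of representatives giving `s` distinct points. -/
def SPoints {k : ℕ} {n : Fin k → ℕ} {s : ℕ} (P : Fin s → PointRep K k n) : Prop :=
  (∀ a, IsRep K (P a)) ∧ ∀ a b, a ≠ b → ¬ ProjEq K (P a) (P b)

/-- The defining ideal `I_X` of the set of points: all polynomials vanishing on
the multi-cone over the points, i.e. the intersection of the point ideals. -/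
noncomputable def idealOfPoints {k : ℕ} {n : Fin k → ℕ} {s : ℕ}
    (P : Fin s → PointRep K k n) : Ideal (MvPolynomial (Var k n) K) :=
  ⨅ (a : Fin s), ⨅ (c : Fin k → K),
    RingHom.ker (eval (fun v : Var k n => c v.1 * P a v.1 v.2))

/-- The degree-`d` piece `I_d` of an ideal, as a `K`-subspace. -/
noncomputable def idealPiece {k : ℕ} {n : Fin k → ℕ}
    (I : Ideal (MvPolynomial (Var k n) K)) (d : Fin k → ℕ) :
    Submodule K (MvPolynomial (Var k n) K) :=
  (Submodule.restrictScalars K I) ⊓ piece K k n d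

/-- The multigraded Hilbert function of `X`:
`H_X(d) = dim (R/I_X)_d = dim R_d - dim (I_X)_d`. -/
noncomputable def hilbert {k : ℕ} {n : Fin k → ℕ} {s : ℕ}
    (P : Fin s → PointRep K k n) (d : Fin k → ℕ) : ℕ :=
  NN k n d - Module.finrank K (idealPiece K (idealOfPoints K P) d)

/-- Generic position: `s` distinct points whose Hilbert function is maximal. -/
def GenericPosition {k : ℕ} {n : Fin k → ℕ} {s : ℕ} (P : Fin s → PointRep K k n) : Prop :=
  SPoints K P ∧ ∀ d : Fin k → ℕ, hilbert K P d = min (NN k n d) s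

/-- `R_{e_l}·V`: the span of all products of a variable of degree `e_l`
with an element of `V`. -/
noncomputable def mulSpan {k : ℕ} {n : Fin k → ℕ} (l : Fin k)
    (V : Submodule K (MvPolynomial (Var k n) K)) :
    Submodule K (MvPolynomial (Var k n) K) :=
  Submodule.span K {g | ∃ (m : Fin (n l + 1)) (f : MvPolynomial (Var k n) K),
    f ∈ V ∧ g = X (⟨l, m⟩ : Var k n) * f}

/-- `D = min { i ∈ ℕ^k | N(i) > s }` (minimal elements for the componentwise order). -/
def Dset (k : ℕ) (n : Fin k → ℕ) (s : ℕ) : Set (Fin k → ℕ) :=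
  {i | s < NN k n i ∧ ∀ j : Fin k → ℕ, s < NN k n j → j ≤ i → j = i}

/-- The irrelevant maximal ideal of `R`, generated by all the variables. -/
noncomputable def irrelevant (k : ℕ) (n : Fin k → ℕ) : Ideal (MvPolynomial (Var k n) K) :=
  Ideal.span (Set.range (X : Var k n → MvPolynomial (Var k n) K))


section Aux
variable {K : Type} [Field K]

lemma weight_wt_apply {k : ℕ} {n : Fin k → ℕ} (m : Var k n →₀ ℕ) (i : Fin k) :
    Finsupp.weight (wt k n) m i = ∑ j : Fin (n i + 1), m ⟨i, j⟩ := by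
  classical
  rw [Finsupp.weight_apply, Finsupp.sum]
  rw [Finset.sum_apply]
  have h1 : ∀ v : Var k n, (m v • wt k n v) i = if v.1 = i then m v else 0 := by
    intro v
    simp [wt, Pi.single_apply, Pi.smul_apply, eq_comm]
  calc (∑ v ∈ m.support, (m v • wt k n v) i)
      = ∑ v ∈ m.support, if v.1 = i then m v else 0 := Finset.sum_congr rfl (fun v _ => h1 v)
    _ = ∑ v : Var k n, if v.1 = i then m v else 0 := by
        apply Finset.sum_subset (Finset.subset_univ _)
        intro v _ hv
        simp [Finsupp.notMem_support_iff.mp hv]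
    _ = ∑ a : Fin k, ∑ j : Fin (n a + 1), if a = i then m ⟨a, j⟩ else 0 := by
        rw [← Finset.univ_sigma_univ, Finset.sum_sigma]
    _ = ∑ j : Fin (n i + 1), m ⟨i, j⟩ := by
        rw [Finset.sum_eq_single i] <;> simp +contextual

lemma piece_le_restrict {k : ℕ} {n : Fin k → ℕ} (d : Fin k → ℕ) :
    piece K k n d ≤ restrictTotalDegree (Var k n) K (∑ i, d i) := by
  intro p hp
  rw [mem_restrictTotalDegree]
  apply Finset.sup_le
  intro m hm
  have hw : Finsupp.weight (wt k n) m = d := hp (mem_support_iff.mp hm)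
  have : (m.sum fun _ e => e) = ∑ v : Var k n, m v := by
    rw [Finsupp.sum]
    apply Finset.sum_subset (Finset.subset_univ _)
    intro v _ hv
    exact Finsupp.notMem_support_iff.mp hv
  rw [this, ← Finset.univ_sigma_univ, Finset.sum_sigma]
  apply le_of_eq
  exact Finset.sum_congr rfl fun i _ => by rw [← weight_wt_apply, hw]

instance pieceFD {k : ℕ} {n : Fin k → ℕ} (d : Fin k → ℕ) :
    FiniteDimensional K (piece K k n d) :=
  Submodule.finiteDimensional_of_le (piece_le_restrict d)

lemma eval_scale {k : ℕ} {n : Fin k → ℕ} {d : Fin k → ℕ} {g : MvPolynomial (Var k n) K}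
    (hg : g ∈ piece K k n d) (c : Fin k → K) (Q : Var k n → K) :
    eval (fun v : Var k n => c v.1 * Q v) g = (∏ i, c i ^ d i) * eval Q g := by
  rw [eval_eq', eval_eq', Finset.mul_sum]
  apply Finset.sum_congr rfl
  intro m hm
  have hw : Finsupp.weight (wt k n) m = d := hg (mem_support_iff.mp hm)
  have h2 : (∏ v : Var k n, (c v.1 * Q v) ^ m v)
      = (∏ v : Var k n, c v.1 ^ m v) * ∏ v : Var k n, Q v ^ m v := by
    rw [← Finset.prod_mul_distrib]
    exact Finset.prod_congr rfl fun v _ => mul_pow _ _ _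
  have h3 : (∏ v : Var k n, c v.1 ^ m v) = ∏ i, c i ^ d i := by
    rw [← Finset.univ_sigma_univ, Finset.prod_sigma]
    refine Finset.prod_congr rfl fun i _ => ?_
    have : (∏ s : Fin (n i + 1), c (⟨i, s⟩ : Var k n).fst ^ m ⟨i, s⟩)
        = c i ^ ∑ j : Fin (n i + 1), m ⟨i, j⟩ := by
      show (∏ s : Fin (n i + 1), c i ^ m ⟨i, s⟩) = _
      rw [Finset.prod_pow_eq_pow_sum]
    rw [this, ← weight_wt_apply, hw]
  rw [h2, h3]; ring



lemma mem_idealOfPoints_iff {k : ℕ} {n : Fin k → ℕ} {s : ℕ} (P : Fin s → PointRep K k n)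
    {g : MvPolynomial (Var k n) K} :
    g ∈ idealOfPoints K P ↔
      ∀ (a : Fin s) (c : Fin k → K), eval (fun v : Var k n => c v.1 * P a v.1 v.2) g = 0 := by
  simp [idealOfPoints, Submodule.mem_iInf, RingHom.mem_ker]

lemma homog_mem_ideal {k : ℕ} {n : Fin k → ℕ} {s : ℕ} (P : Fin s → PointRep K k n)
    {d : Fin k → ℕ} {g : MvPolynomial (Var k n) K} (hg : g ∈ piece K k n d)
    (h : ∀ a, eval (fun v : Var k n => P a v.1 v.2) g = 0) : g ∈ idealOfPoints K P := by
  rw [mem_idealOfPoints_iff]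
  intro a c
  rw [eval_scale hg c, h a, mul_zero]

lemma NN_one_eq {k : ℕ} (d : Fin k → ℕ) : NN k (fun _ => 1) d = ∏ i, (d i + 1) :=
  Finset.prod_congr rfl fun i _ => by rw [add_comm 1 (d i), Nat.choose_succ_self_right]

lemma NN_pos {k : ℕ} {n : Fin k → ℕ} (d : Fin k → ℕ) : 0 < NN k n d :=
  Finset.prod_pos fun i _ => Nat.choose_pos (Nat.le_add_left _ _)

lemma weight_single_var {k : ℕ} {n : Fin k → ℕ} (v : Var k n) :
    Finsupp.weight (wt k n) (Finsupp.single v 1) = e v.1 := by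
  rw [Finsupp.weight_apply, Finsupp.sum_single_index] <;> simp [wt, e]

lemma ker_step {k : ℕ} {s : ℕ} (P : Fin s → PointRep K k (fun _ => 1))
    (hP : ∀ a, IsRep K (P a)) (j' : Fin k → ℕ) (l : Fin k)
    (hzero : idealPiece K (idealOfPoints K P) (j' - e l) = ⊥)
    (f0 f1 : MvPolynomial (Var k (fun _ => 1)) K)
    (h0 : f0 ∈ idealPiece K (idealOfPoints K P) j')
    (h1 : f1 ∈ idealPiece K (idealOfPoints K P) j')
    (heq : X (⟨l, 0⟩ : Var k (fun _ => 1)) * f0 + X (⟨l, 1⟩ : Var k (fun _ => 1)) * f1 = 0) :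
    f0 = 0 ∧ f1 = 0 := by
  classical
  set x0 : Var k (fun _ => 1) := ⟨l, 0⟩ with hx0
  set x1 : Var k (fun _ => 1) := ⟨l, 1⟩ with hx1
  have hne : x0 ≠ x1 := by simp [hx0, hx1]
  -- coefficients of f1 all divisible by x0
  have hcoeff : ∀ m : Var k (fun _ => 1) →₀ ℕ, m x0 = 0 → coeff m f1 = 0 := by
    intro m hm
    have h := congrArg (coeff (Finsupp.single x1 1 + m)) heq
    rw [coeff_add, coeff_zero, coeff_X_mul, coeff_X_mul'] at h
    have hns : x0 ∉ (Finsupp.single x1 1 + m).support := by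
      simp [Finsupp.single_apply, hne.symm, hm]
    rw [if_neg hns, zero_add] at h
    exact h
  -- f1 = X x0 * g
  set g : MvPolynomial (Var k (fun _ => 1)) K := f1.divMonomial (Finsupp.single x0 1) with hgdef
  have hmod : f1.modMonomial (Finsupp.single x0 1) = 0 := by
    apply (MvPolynomial.eq_zero_iff).mpr
    intro m
    by_cases hle : Finsupp.single x0 1 ≤ m
    · exact coeff_modMonomial_of_le f1 hle
    · rw [coeff_modMonomial_of_not_le f1 hle]
      apply hcoeff
      rw [Finsupp.single_le_iff] at hle
      omega
  have hf1 : f1 = X x0 * g := by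
    conv_lhs => rw [← MvPolynomial.modMonomial_add_divMonomial f1 (Finsupp.single x0 1)]
    rw [hmod, zero_add, X]
  -- f0 = -(X x1 * g)
  have hf0 : f0 = -(X x1 * g) := by
    have h2 : X x0 * (f0 + X x1 * g) = 0 := by
      rw [hf1] at heq; ring_nf at heq ⊢; linear_combination heq
    rcases mul_eq_zero.mp h2 with h | h
    · exact absurd h (X_ne_zero x0)
    · exact eq_neg_of_add_eq_zero_left h
  -- g is homogeneous of degree j' - e l
  have hgp : g ∈ piece K k (fun _ => 1) (j' - e l) := by
    intro m hm
    have hc : coeff (Finsupp.single x0 1 + m) f1 ≠ 0 := by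
      rw [hf1, coeff_X_mul]; exact hm
    have hw := h1.2 hc
    rw [map_add, weight_single_var] at hw
    funext i
    have hwi := congrFun hw i
    simp only [Pi.add_apply, Pi.sub_apply, e, hx0] at hwi ⊢
    rcases eq_or_ne i l with rfl | hil
    · simp only [Pi.single_eq_same] at hwi ⊢; omega
    · simp only [Pi.single_eq_of_ne hil] at hwi ⊢; omega
  -- X x0 * g and X x1 * g are in the ideal
  have hg0 : X x0 * g ∈ idealOfPoints K P := by rw [← hf1]; exact h1.1
  have hg1 : X x1 * g ∈ idealOfPoints K P := by
    have hmem := h0.1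
    rw [hf0] at hmem
    simpa using (neg_mem hmem : -(-(X x1 * g)) ∈ idealOfPoints K P)
  -- g vanishes at all the points
  have hev : ∀ a, eval (fun v : Var k (fun _ => 1) => P a v.1 v.2) g = 0 := by
    intro a
    obtain ⟨m0, hm0⟩ := Function.ne_iff.mp (hP a l)
    have hev1 : ∀ (v : Var k (fun _ => 1)), X v * g ∈ idealOfPoints K P →
        P a v.1 v.2 * eval (fun u : Var k (fun _ => 1) => P a u.1 u.2) g = 0 := by
      intro v hv
      have h3 := (mem_idealOfPoints_iff P).mp hv a (fun _ => 1)
      simp only [one_mul] at h3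
      rwa [map_mul, eval_X] at h3
    fin_cases m0
    · exact (mul_eq_zero.mp (hev1 x0 hg0)).resolve_left hm0
    · exact (mul_eq_zero.mp (hev1 x1 hg1)).resolve_left hm0
  -- conclude g = 0
  have hgI : g ∈ idealPiece K (idealOfPoints K P) (j' - e l) :=
    ⟨homog_mem_ideal P hgp hev, hgp⟩
  rw [hzero] at hgI
  have hg : g = 0 := hgI
  exact ⟨by rw [hf0, hg, mul_zero, neg_zero], by rw [hf1, hg, mul_zero]⟩


end Aux

theorem dim_W_single_index_P1 (K : Type) [Field K] [IsAlgClosed K] [CharZero K]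
    (k : ℕ) {s : ℕ} (hs : 1 < s) (P : Fin s → PointRep K k (fun _ => 1))
    (hgen : GenericPosition K P) (j : Fin k → ℕ) (l : Fin k)
    (hl : 1 ≤ j l ∧ j - e l ∈ Dset k (fun _ => 1) s)
    (hunique : ∀ m : Fin k, m ≠ l → ¬ (1 ≤ j m ∧ j - e m ∈ Dset k (fun _ => 1) s)) :
    (NN k (fun _ => 1) (j - e l - e l) = s →
      Module.finrank K (mulSpan K l (idealPiece K (idealOfPoints K P) (j - e l)))
        = NN k (fun _ => 1) j - s) ∧
    (NN k (fun _ => 1) (j - e l - e l) < s →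
      Module.finrank K (mulSpan K l (idealPiece K (idealOfPoints K P) (j - e l)))
        = 2 * NN k (fun _ => 1) (j - e l) - 2 * s) := by
  classical
  obtain ⟨hSP, hHF⟩ := hgen
  set V := idealPiece K (idealOfPoints K P) (j - e l) with hVdef
  have hslt : s < NN k (fun _ => 1) (j - e l) := hl.2.1
  have hVfd : FiniteDimensional K V := Submodule.finiteDimensional_of_le inf_le_right
  have hdV : Module.finrank K V = NN k (fun _ => 1) (j - e l) - s := by
    have h := hHF (j - e l)
    rw [hilbert, min_eq_right (le_of_lt hslt), ← hVdef] at h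
    omega
  have key : NN k (fun _ => 1) (j - e l - e l) ≤ s →
      Module.finrank K (mulSpan K l V) = 2 * (NN k (fun _ => 1) (j - e l) - s) := by
    intro hle
    have hfd0 : FiniteDimensional K (idealPiece K (idealOfPoints K P) (j - e l - e l)) :=
      Submodule.finiteDimensional_of_le inf_le_right
    have hzero : idealPiece K (idealOfPoints K P) (j - e l - e l) = ⊥ := by
      have h := hHF (j - e l - e l)
      rw [hilbert, min_eq_left hle] at h
      have hpos : 0 < NN k (fun _ => 1) (j - e l - e l) := NN_pos _
      have hfr : Module.finrank K (idealPiece K (idealOfPoints K P) (j - e l - e l)) = 0 := by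
        omega
      exact Submodule.finrank_eq_zero.mp hfr
    set Φ : (V × V) →ₗ[K] MvPolynomial (Var k (fun _ => 1)) K :=
      LinearMap.coprod
        ((LinearMap.mulLeft K (X (⟨l, 0⟩ : Var k (fun _ => 1)))).comp V.subtype)
        ((LinearMap.mulLeft K (X (⟨l, 1⟩ : Var k (fun _ => 1)))).comp V.subtype) with hΦ
    have hΦapp : ∀ p : V × V, Φ p =
        X (⟨l, 0⟩ : Var k (fun _ => 1)) * (p.1 : MvPolynomial (Var k (fun _ => 1)) K)
          + X (⟨l, 1⟩ : Var k (fun _ => 1)) * (p.2 : MvPolynomial (Var k (fun _ => 1)) K) := by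
      intro p; rfl
    have hrange : LinearMap.range Φ = mulSpan K l V := by
      apply le_antisymm
      · rintro _ ⟨p, rfl⟩
        rw [hΦapp]
        apply add_mem
        · exact Submodule.subset_span ⟨0, p.1, p.1.2, rfl⟩
        · exact Submodule.subset_span ⟨1, p.2, p.2.2, rfl⟩
      · rw [mulSpan, Submodule.span_le]
        rintro _ ⟨m, f, hf, rfl⟩
        fin_cases m
        · exact ⟨(⟨f, hf⟩, 0), by rw [hΦapp]; simp⟩
        · exact ⟨(0, ⟨f, hf⟩), by rw [hΦapp]; simp⟩
    have hinj : Function.Injective Φ := by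
      rw [← LinearMap.ker_eq_bot]
      apply (Submodule.eq_bot_iff _).mpr
      rintro ⟨f0, f1⟩ hker
      rw [LinearMap.mem_ker, hΦapp] at hker
      obtain ⟨e0, e1⟩ := ker_step P hSP.1 (j - e l) l hzero f0 f1 f0.2 f1.2 hker
      exact Prod.ext (Subtype.ext e0) (Subtype.ext e1)
    rw [← hrange, LinearMap.finrank_range_of_inj hinj, Module.finrank_prod, hdV]
    ring
  -- j l ≥ 2 in both cases
  have hjl2 : NN k (fun _ => 1) (j - e l - e l) ≤ s → 2 ≤ j l := by
    intro hle
    by_contra hcon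
    have hjl : j l = 1 := by omega
    have heqd : j - e l - e l = j - e l := by
      funext i
      rcases eq_or_ne i l with rfl | hil
      · simp [e, Pi.single_eq_same, hjl]
      · simp [e, Pi.single_eq_of_ne hil]
    rw [heqd] at hle
    omega
  have hprods : ∀ d : Fin k → ℕ,
      NN k (fun _ => 1) d = (d l + 1) * ∏ i ∈ Finset.univ.erase l, (d i + 1) := by
    intro d
    rw [NN_one_eq]
    exact (Finset.mul_prod_erase Finset.univ _ (Finset.mem_univ l)).symm
  have herase : ∀ d : Fin k → ℕ,
      (∏ i ∈ Finset.univ.erase l, ((d - e l) i + 1)) = ∏ i ∈ Finset.univ.erase l, (d i + 1) := by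
    intro d
    refine Finset.prod_congr rfl fun i hi => ?_
    have hil : i ≠ l := Finset.ne_of_mem_erase hi
    simp [e, Pi.single_eq_of_ne hil]
  constructor
  · intro hcase
    have h2 := hjl2 (le_of_eq hcase)
    rw [key (le_of_eq hcase)]
    set M := ∏ i ∈ Finset.univ.erase l, (j i + 1) with hM
    have hjel : (j - e l) l = j l - 1 := by simp [e]
    have hjeel : (j - e l - e l) l = j l - 2 := by
      simp only [Pi.sub_apply, e, Pi.single_eq_same]
      omega
    obtain ⟨b, hb⟩ : ∃ b, j l = b + 2 := ⟨j l - 2, by omega⟩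
    have eN1 : NN k (fun _ => 1) j = (b + 3) * M := by
      rw [hprods j]
      congr 1
      omega
    have eN2 : NN k (fun _ => 1) (j - e l) = (b + 2) * M := by
      rw [hprods (j - e l), hjel, hM, herase j]
      congr 1
      omega
    have eN3 : NN k (fun _ => 1) (j - e l - e l) = (b + 1) * M := by
      rw [hprods (j - e l - e l), hjeel]
      have : (∏ i ∈ Finset.univ.erase l, ((j - e l - e l) i + 1)) = M := by
        rw [hM, ← herase j, ← herase (j - e l)]
      rw [this]
      congr 1
      omega
    have lin1 : (b + 3) * M = (b + 1) * M + 2 * M := by ring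
    have lin2 : (b + 2) * M = (b + 1) * M + M := by ring
    omega
  · intro hcase
    rw [key (le_of_lt hcase)]
    omega

end MultiProjPoints
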